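/- arXiv:1806.07555 — 2 statements merged into one kernel-verified Lean document; each statement's English description precedes it below -/
import Mathlib

section
/- Safety of the safe sets under valid lower bounds: suppose g is L-Lipschitz continuous, g(x) ≥ h for all x ∈ S_0, and ℓ_t(x) ≤ g(x) for all x and t. If S_t is defined recursively by S_t = {x ∈ D : ∃ z ∈ S_{t-1}, ℓ_t(z) - L·d(z,x) ≥ h}, then g(x) ≥ h for all x ∈ S_t and all t ≥ 0. -/
theorem safe_sets_safe {D : Type*} [MetricSpace D]
    (g : D → ℝ) (L h : ℝ) (hL : 0 ≤ L)
    (hLip : ∀ x z : D, |g x - g z| ≤ L * dist x z)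
    (S : ℕ → Set D)
    (hS0 : ∀ x ∈ S 0, g x ≥ h)
    (ℓ : ℕ → D → ℝ) (hℓ : ∀ t x, ℓ t x ≤ g x)
    (hS : ∀ t : ℕ, S (t + 1) = {x : D | ∃ z ∈ S t, ℓ (t + 1) z - L * dist z x ≥ h}) :
    ∀ t : ℕ, ∀ x ∈ S t, g x ≥ h := by
  intro t
  induction t with
  | zero => exact hS0
  | succ t ih =>
    intro x hx
    rw [hS t] at hx
    obtain ⟨z, hz, hzx⟩ := hx
    have h1 : g z - g x ≤ L * dist z x := (abs_le.mp (hLip z x)).2.trans_eq rfl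
    have h2 : ℓ (t + 1) z ≤ g z := hℓ (t + 1) z
    linarith
end

section
/- Containment of safe sets in the 0-reachable closure: suppose ℓ_t(x) ≤ g(x) for all x ∈ D and t ≥ 1, S_0 ⊆ R̄_0(S_0), and S_t := {x ∈ D : ∃ z ∈ S_{t-1}, ℓ_t(z) - L·d(z,x) ≥ h}. Then S_t ⊆ R̄_0(S_0) for all t ≥ 0. -/
def reach0 {D : Type*} [MetricSpace D] (g : D → ℝ) (L h : ℝ) (S : Set D) : Set D :=
  S ∪ {x : D | ∃ x' ∈ S, g x' - L * dist x' x ≥ h}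

def reach0Closure {D : Type*} [MetricSpace D] (g : D → ℝ) (L h : ℝ) (S : Set D) : Set D :=
  ⋃ T : ℕ, (reach0 g L h)^[T] S

theorem safe_sets_in_closure {D : Type*} [MetricSpace D] [Fintype D]
    (g : D → ℝ) (L h : ℝ) (hL : 0 ≤ L)
    (ℓ : ℕ → D → ℝ) (hℓ : ∀ t x, ℓ t x ≤ g x)
    (S : ℕ → Set D)
    (hS0 : S 0 ⊆ reach0Closure g L h (S 0))
    (hS : ∀ t : ℕ, S (t + 1) = {x : D | ∃ z ∈ S t, ℓ (t + 1) z - L * dist z x ≥ h}) :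
    ∀ t : ℕ, S t ⊆ reach0Closure g L h (S 0) := by
  intro t
  induction t with
  | zero => exact hS0
  | succ t ih =>
    rw [hS t]
    rintro x ⟨z, hz, hge⟩
    obtain ⟨_, ⟨T, rfl⟩, hzT⟩ := ih hz
    refine Set.mem_iUnion.mpr ⟨T + 1, ?_⟩
    rw [Function.iterate_succ_apply']
    exact Or.inr ⟨z, hzT, le_trans hge (by linarith [hℓ (t+1) z])⟩
end
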